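/- Let V ⊆ EuclideanSpace ℝ (Fin 5) be the set of all coordinate permutations of the point (1,1,1,0,0). Then the set of extreme points of the convex hull of V is exactly V; in particular the Euclidean rectified 5-cell convexHull ℝ V has precisely 10 vertices. -/

import Mathlib

/-!
Every point of `V` has three coordinates equal to `1` and the rest `0`, so `V` lies on the sphere
of radius `√3` about the origin. In a strictly convex space every point of a sphere is an extreme
point of the closed ball it bounds, hence of any subset of that ball containing it, such as
`convexHull ℝ V`. The count is `choose 5 3`, via indicator vectors of `3`-subsets of
`Fin 5`.
-/

noncomputable section

/-- The vertex set of the Euclidean rectified 5-cell: all coordinate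
permutations of the point `(1,1,1,0,0)`. -/
def V : Set (EuclideanSpace ℝ (Fin 5)) :=
  {x | (∀ i, x i = 0 ∨ x i = 1) ∧ (∑ i, x i) = 3}

open Set Finset Metric

theorem extremePoints_convexHull_of_subset_sphere {E : Type*} [NormedAddCommGroup E]
    [NormedSpace ℝ E] [StrictConvexSpace ℝ E] {s : Set E} {a : E} {r : ℝ}
    (hs : s ⊆ sphere a r) : (convexHull ℝ s).extremePoints ℝ = s := by
  rcases eq_or_ne r 0 with rfl | hr
  · rw [sphere_zero, Set.subset_singleton_iff_eq] at hs
    rcases hs with rfl | rfl <;> simp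
  refine extremePoints_convexHull_subset.antisymm fun x hx ↦ ?_
  have hball : convexHull ℝ s ⊆ closedBall a r :=
    convexHull_min (hs.trans sphere_subset_closedBall) (convex_closedBall a r)
  exact inter_extremePoints_subset_extremePoints_of_subset hball ⟨subset_convexHull ℝ s hx,
    StrictConvexSpace.sphere_subset_extremePoints_closedBall a hr (hs hx)⟩

namespace EuclideanSpace

def hypersimplexVertices (ι : Type*) [Fintype ι] (k : ℕ) : Set (EuclideanSpace ℝ ι) :=
  {x | (∀ i, x i = 0 ∨ x i = 1) ∧ ∑ i, x i = k}

variable {ι : Type*}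

theorem hypersimplexVertices_subset_sphere [Fintype ι] (k : ℕ) :
    hypersimplexVertices ι k ⊆ sphere 0 √k := by
  rintro x ⟨h01, hsum⟩
  have hnorm : ‖x‖ ^ 2 = ∑ i, x i := by
    rw [real_norm_sq_eq]
    refine Finset.sum_congr rfl fun i _ ↦ ?_
    rcases h01 i with h | h <;> simp [h]
  rw [mem_sphere_zero_iff_norm, ← Real.sqrt_sq (norm_nonneg x), hnorm, hsum]

variable [DecidableEq ι]

def indicatorVec (s : Finset ι) : EuclideanSpace ℝ ι :=
  WithLp.toLp 2 fun i ↦ if i ∈ s then 1 else 0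

@[simp]
theorem indicatorVec_apply (s : Finset ι) (i : ι) :
    indicatorVec s i = if i ∈ s then 1 else 0 := rfl

theorem indicatorVec_injective : Function.Injective (indicatorVec : Finset ι → _) := by
  intro s t h
  ext i
  simpa using congrArg (· i = 1) h

variable [Fintype ι]

theorem sum_indicatorVec (s : Finset ι) : ∑ i, indicatorVec s i = #s := by
  simp

theorem hypersimplexVertices_eq_image_indicatorVec (k : ℕ) :
    hypersimplexVertices ι k =
      indicatorVec '' ((powersetCard k univ : Finset (Finset ι)) : Set (Finset ι)) := by
  ext x
  simp only [hypersimplexVertices, mem_ofPred_eq, mem_image, mem_coe, mem_powersetCard,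
    Finset.subset_univ, true_and]
  constructor
  · rintro ⟨h01, hsum⟩
    have hx : indicatorVec ({i | x i = 1} : Finset ι) = x := by
      ext i
      rcases h01 i with h | h <;> simp [h]
    refine ⟨_, ?_, hx⟩
    exact_mod_cast (sum_indicatorVec _).symm.trans (hx ▸ hsum)
  · rintro ⟨s, rfl, rfl⟩
    refine ⟨fun i ↦ ?_, sum_indicatorVec s⟩
    by_cases h : i ∈ s <;> simp [h]

theorem ncard_hypersimplexVertices (k : ℕ) :
    (hypersimplexVertices ι k).ncard = (Fintype.card ι).choose k := by
  rw [hypersimplexVertices_eq_image_indicatorVec, ncard_image_of_injective _ indicatorVec_injective,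
    ncard_coe_finset, card_powersetCard, card_univ]

end EuclideanSpace

theorem extremePoints_rectified5cell :
    Set.extremePoints ℝ (convexHull ℝ V) = V ∧ V.ncard = 10 := by
  have hV : V = EuclideanSpace.hypersimplexVertices (Fin 5) 3 := by
    simp [V, EuclideanSpace.hypersimplexVertices]
  rw [hV]
  exact ⟨extremePoints_convexHull_of_subset_sphere
      (EuclideanSpace.hypersimplexVertices_subset_sphere 3),
    EuclideanSpace.ncard_hypersimplexVertices 3⟩
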